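/- Let u : ℝ → ℝ be eight times continuously differentiable and let x ∈ ℝ. Then the function h ↦ (u(x−3h) − 6u(x−2h) + 15u(x−h) − 20u(x) + 15u(x+h) − 6u(x+2h) + u(x+3h))/(64h) − (h⁵/64)·u⁽⁶⁾(x) is O(h⁷) as h → 0 (h ≠ 0), where u⁽⁶⁾ denotes the sixth derivative of u. -/

import Mathlib

/-!
Expand `u` around `x` in its Taylor polynomial of order 8, whose remainder is `o((y - x)⁸)` by
Taylor's theorem in Peano form. The central sixth difference annihilates the monomials of
degree `< 6` and the odd one of degree 7, maps `(y - x)⁶ / 6!` to `h⁶` and `(y - x)⁸ / 8!` to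
`h⁸ / 4`, and takes an `O((y - x)⁸)` remainder to an `O(h⁸)` one. Hence the stencil minus
`h⁶ u⁽⁶⁾(x)` is `O(h⁸)`, and dividing by `64 h` gives the claim.
-/

open Filter Asymptotics Topology Set

def centralSixthDiff (u : ℝ → ℝ) (x h : ℝ) : ℝ :=
  u (x - 3 * h) - 6 * u (x - 2 * h) + 15 * u (x - h) - 20 * u x
    + 15 * u (x + h) - 6 * u (x + 2 * h) + u (x + 3 * h)

lemma centralSixthDiff_add (f g : ℝ → ℝ) (x h : ℝ) :
    centralSixthDiff (f + g) x h = centralSixthDiff f x h + centralSixthDiff g x h := by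
  simp only [centralSixthDiff, Pi.add_apply]
  ring

lemma centralSixthDiff_taylorWithinEval (u : ℝ → ℝ) (x h : ℝ) :
    centralSixthDiff (taylorWithinEval u 8 univ x) x h
      = h ^ 6 * iteratedDeriv 6 u x + h ^ 8 * iteratedDeriv 8 u x / 4 := by
  simp only [centralSixthDiff, taylor_within_apply, iteratedDerivWithin_univ,
    Finset.sum_range_succ, Finset.sum_range_zero, smul_eq_mul]
  norm_num [Nat.factorial]
  ring

lemma isBigO_comp_add_mul {R : ℝ → ℝ} {x : ℝ} {n : ℕ}
    (hR : R =O[𝓝 x] fun y => (y - x) ^ n) (c : ℝ) :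
    (fun h => R (x + c * h)) =O[𝓝 0] fun h => h ^ n := by
  have hlim : Tendsto (fun h : ℝ => x + c * h) (𝓝 0) (𝓝 x) := by
    simpa using ((continuous_const_mul c).const_add x).tendsto 0
  have hscaled : (fun h => R (x + c * h)) =O[𝓝 0] fun h => c ^ n * h ^ n := by
    simpa [Function.comp_def, mul_pow] using hR.comp_tendsto hlim
  exact hscaled.trans ((isBigO_refl _ _).const_mul_left _)

lemma centralSixthDiff_isBigO {R : ℝ → ℝ} {x : ℝ} {n : ℕ}
    (hR : R =O[𝓝 x] fun y => (y - x) ^ n) :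
    (fun h => centralSixthDiff R x h) =O[𝓝 0] fun h => h ^ n := by
  have hadd := isBigO_comp_add_mul hR
  have hsub (c : ℝ) : (fun h => R (x - c * h)) =O[𝓝 0] fun h => h ^ n := by
    simpa [neg_mul, ← sub_eq_add_neg] using hadd (-c)
  have h0 : (fun _ => R x) =O[𝓝 0] fun h : ℝ => h ^ n := by simpa using hadd 0
  have hsub1 : (fun h => R (x - h)) =O[𝓝 0] fun h => h ^ n := by simpa using hsub 1
  have hadd1 : (fun h => R (x + h)) =O[𝓝 0] fun h => h ^ n := by simpa using hadd 1
  exact (((((((hsub 3).sub ((hsub 2).const_mul_left 6)).add (hsub1.const_mul_left 15)).sub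
    (h0.const_mul_left 20)).add (hadd1.const_mul_left 15)).sub ((hadd 2).const_mul_left 6)).add
    (hadd 3))

lemma isBigO_div_mul_self {f : ℝ → ℝ} {n : ℕ} (hf : f =O[𝓝 0] fun h => h ^ (n + 1)) (a : ℝ) :
    (fun h => f h / (a * h)) =O[𝓝[≠] 0] fun h => h ^ n := by
  have hdiv : (fun h => f h * h⁻¹) =O[𝓝[≠] 0] fun h => h ^ (n + 1) * h⁻¹ :=
    (hf.mono nhdsWithin_le_nhds).mul (isBigO_refl _ _)
  have hcancel : (fun h : ℝ => h ^ (n + 1) * h⁻¹) =ᶠ[𝓝[≠] 0] fun h => h ^ n := by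
    filter_upwards [self_mem_nhdsWithin] with h hh
    rw [pow_succ, mul_inv_cancel_right₀ hh]
  refine ((hdiv.trans_eventuallyEq hcancel).const_mul_left a⁻¹).congr_left fun h => ?_
  rw [div_eq_mul_inv, mul_inv]
  ring

/-- Kreiss–Oliger dissipation (with ε = 1): for a C⁸ function u,
(u(x−3h) − 6u(x−2h) + 15u(x−h) − 20u(x) + 15u(x+h) − 6u(x+2h) + u(x+3h))/(64h)
− (h⁵/64)u⁽⁶⁾(x) = O(h⁷) as h → 0. -/
theorem kreiss_oliger_dissipation (u : ℝ → ℝ) (hu : ContDiff ℝ 8 u) (x : ℝ) :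
    (fun h : ℝ =>
        (u (x - 3 * h) - 6 * u (x - 2 * h) + 15 * u (x - h) - 20 * u x
            + 15 * u (x + h) - 6 * u (x + 2 * h) + u (x + 3 * h)) / (64 * h)
          - (h ^ 5 / 64) * iteratedDeriv 6 u x)
      =O[nhdsWithin (0 : ℝ) {0}ᶜ] fun h : ℝ => h ^ 7 := by
  set T := taylorWithinEval u 8 univ x
  have hR : (u - T) =O[𝓝 x] fun y => (y - x) ^ 8 := (taylor_isLittleO_univ hu).isBigO
  have hsplit (h : ℝ) : centralSixthDiff u x h - h ^ 6 * iteratedDeriv 6 u x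
      = iteratedDeriv 8 u x / 4 * h ^ 8 + centralSixthDiff (u - T) x h := by
    have hTR := centralSixthDiff_add T (u - T) x h
    rw [add_sub_cancel, centralSixthDiff_taylorWithinEval] at hTR
    rw [hTR]
    ring
  have hnum : (fun h => centralSixthDiff u x h - h ^ 6 * iteratedDeriv 6 u x) =O[𝓝 0]
      fun h => h ^ 8 := by
    simp only [hsplit]
    exact ((isBigO_refl _ _).const_mul_left _).add (centralSixthDiff_isBigO hR)
  refine (isBigO_div_mul_self hnum 64).congr' ?_ EventuallyEq.rfl
  filter_upwards [self_mem_nhdsWithin] with h hh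
  simp only [centralSixthDiff]
  field_simp
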